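/- arXiv:1212.1247 — 2 statements merged into one kernel-verified Lean document; each statement's English description precedes it below -/
import Mathlib

section
/- Let A, B be m×n real matrices with SVD A = Σ σ_i x_i y_i^T, singular values in decreasing order, and let S = {i : σ_i > (1+δ)‖A−B‖} for some δ > 0. Then |S| ≤ ‖B‖_* / (δ·‖A−B‖), provided ‖A−B‖ > 0. -/
noncomputable def singularValues {m n : ℕ} (A : Matrix (Fin m) (Fin n) ℝ) : Fin n → ℝ :=
  fun i => Real.sqrt ((Matrix.isHermitian_conjTranspose_mul_self A).eigenvalues i)

noncomputable def nuclearNorm {m n : ℕ} (A : Matrix (Fin m) (Fin n) ℝ) : ℝ :=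
  ∑ i, singularValues A i

noncomputable def frobeniusNorm {m n : ℕ} (A : Matrix (Fin m) (Fin n) ℝ) : ℝ :=
  Real.sqrt (∑ i, ∑ j, (A i j)^2)

noncomputable def spectralNorm' {m n : ℕ} (A : Matrix (Fin m) (Fin n) ℝ) : ℝ :=
  ⨆ i, singularValues A i

/-! For `i ∈ S` let `vᵢ` be the right singular vector of `A` and `xᵢ = A vᵢ / σᵢ` the left one.
Then `⟪xᵢ, B vᵢ⟫ = σᵢ - ⟪xᵢ, (A - B) vᵢ⟫ ≥ σᵢ - ‖A - B‖ > δ ‖A - B‖`. On the other hand, for any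
orthonormal families `(xᵢ)`, `(vᵢ)` the sum `∑ ⟪xᵢ, B vᵢ⟫` is at most `‖B‖_*`: expanding `vᵢ` in
the right singular basis `(eⱼ)` of `B` and applying Cauchy–Schwarz and Bessel's inequality in `i`
bounds it by `∑ⱼ ‖B eⱼ‖ = ∑ⱼ τⱼ`. -/

open Finset Matrix RealInnerProductSpace

section InnerProductSpace

variable {ι κ E F : Type*} [Fintype ι]
  [NormedAddCommGroup E] [InnerProductSpace ℝ E] [NormedAddCommGroup F] [InnerProductSpace ℝ F]

theorem Orthonormal.sqrt_sum_inner_sq_le {v : ι → E} (hv : Orthonormal ℝ v) (y : E) :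
    √(∑ i, ⟪v i, y⟫ ^ 2) ≤ ‖y‖ := by
  refine Real.sqrt_le_iff.mpr ⟨norm_nonneg y, ?_⟩
  simpa only [Real.norm_eq_abs, sq_abs] using hv.sum_inner_products_le y (s := univ)

theorem Orthonormal.sum_inner_mul_inner_le {x : ι → F} {v : ι → E} (hx : Orthonormal ℝ x)
    (hv : Orthonormal ℝ v) (y : F) (z : E) :
    ∑ i, ⟪x i, y⟫ * ⟪v i, z⟫ ≤ ‖y‖ * ‖z‖ :=
  (Real.sum_mul_le_sqrt_mul_sqrt _ _ _).trans <|
    mul_le_mul (hx.sqrt_sum_inner_sq_le y) (hv.sqrt_sum_inner_sq_le z) (Real.sqrt_nonneg _)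
      (norm_nonneg y)

theorem Orthonormal.sum_inner_map_le_sum_norm [Fintype κ] {x : ι → F} {v : ι → E}
    (hx : Orthonormal ℝ x) (hv : Orthonormal ℝ v) (T : E →ₗ[ℝ] F) (b : OrthonormalBasis κ ℝ E) :
    ∑ i, ⟪x i, T (v i)⟫ ≤ ∑ j, ‖T (b j)‖ :=
  calc ∑ i, ⟪x i, T (v i)⟫ = ∑ j, ∑ i, ⟪x i, T (b j)⟫ * ⟪v i, b j⟫ := by
        rw [Finset.sum_comm]
        refine sum_congr rfl fun i _ => ?_
        conv_lhs => rw [← b.sum_repr' (v i)]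
        simp only [map_sum, map_smul, inner_sum, inner_smul_right, real_inner_comm (b _), mul_comm]
    _ ≤ ∑ j, ‖T (b j)‖ * ‖b j‖ := sum_le_sum fun j _ => hx.sum_inner_mul_inner_le hv _ _
    _ = ∑ j, ‖T (b j)‖ := by simp only [b.orthonormal.1, mul_one]

end InnerProductSpace

namespace Matrix

variable {m n : ℕ} (M : Matrix (Fin m) (Fin n) ℝ)

noncomputable def rightSingularBasis : OrthonormalBasis (Fin n) ℝ (EuclideanSpace ℝ (Fin n)) :=
  (isHermitian_conjTranspose_mul_self M).eigenvectorBasis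

noncomputable def leftSingularVector (i : Fin n) : EuclideanSpace ℝ (Fin m) :=
  (singularValues M i)⁻¹ • toEuclideanLin M (rightSingularBasis M i)

theorem singularValues_nonneg (i : Fin n) : 0 ≤ singularValues M i :=
  Real.sqrt_nonneg _

theorem sq_singularValues (i : Fin n) :
    singularValues M i ^ 2 = (isHermitian_conjTranspose_mul_self M).eigenvalues i :=
  Real.sq_sqrt ((posSemidef_conjTranspose_mul_self M).eigenvalues_nonneg i)

theorem singularValues_le_spectralNorm' (i : Fin n) : singularValues M i ≤ spectralNorm' M :=
  le_ciSup (Set.finite_range _).bddAbove i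

theorem spectralNorm'_nonneg : 0 ≤ spectralNorm' M :=
  Real.iSup_nonneg (singularValues_nonneg M)

theorem inner_toEuclideanLin_rightSingularBasis (i j : Fin n) :
    ⟪toEuclideanLin M (rightSingularBasis M i), toEuclideanLin M (rightSingularBasis M j)⟫ =
      if i = j then singularValues M i ^ 2 else 0 := by
  rw [← LinearMap.adjoint_inner_right, ← toEuclideanLin_conjTranspose_eq_adjoint,
    ← LinearMap.comp_apply, ← toLpLin_mul_same, toLpLin_apply, rightSingularBasis,
    (isHermitian_conjTranspose_mul_self M).mulVec_eigenvectorBasis, WithLp.toLp_smul,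
    WithLp.toLp_ofLp, real_inner_smul_right,
    orthonormal_iff_ite.mp (OrthonormalBasis.orthonormal _)]
  split_ifs with h <;> simp [h, sq_singularValues]

theorem norm_toEuclideanLin_rightSingularBasis (i : Fin n) :
    ‖toEuclideanLin M (rightSingularBasis M i)‖ = singularValues M i := by
  rw [← sq_eq_sq₀ (norm_nonneg _) (singularValues_nonneg M i), ← real_inner_self_eq_norm_sq,
    inner_toEuclideanLin_rightSingularBasis, if_pos rfl]

theorem nuclearNorm_eq_sum_norm_toEuclideanLin :
    nuclearNorm M = ∑ j, ‖toEuclideanLin M (rightSingularBasis M j)‖ := by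
  simp only [norm_toEuclideanLin_rightSingularBasis, nuclearNorm]

theorem sq_norm_toEuclideanLin (v : EuclideanSpace ℝ (Fin n)) :
    ‖toEuclideanLin M v‖ ^ 2 = ∑ j, ⟪rightSingularBasis M j, v⟫ ^ 2 * singularValues M j ^ 2 := by
  conv_lhs => rw [← (rightSingularBasis M).sum_repr' v]
  simp only [← real_inner_self_eq_norm_sq, map_sum, map_smul, inner_sum, sum_inner,
    real_inner_smul_left, real_inner_smul_right, inner_toEuclideanLin_rightSingularBasis,
    mul_ite, mul_zero, sum_ite_eq', mem_univ, if_true]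
  exact sum_congr rfl fun j _ => by ring

theorem norm_toEuclideanLin_le (v : EuclideanSpace ℝ (Fin n)) :
    ‖toEuclideanLin M v‖ ≤ spectralNorm' M * ‖v‖ := by
  refine le_of_sq_le_sq ?_ (mul_nonneg (spectralNorm'_nonneg M) (norm_nonneg v))
  calc ‖toEuclideanLin M v‖ ^ 2
      = ∑ j, ⟪rightSingularBasis M j, v⟫ ^ 2 * singularValues M j ^ 2 :=
        sq_norm_toEuclideanLin M v
    _ ≤ ∑ j, ⟪rightSingularBasis M j, v⟫ ^ 2 * spectralNorm' M ^ 2 := by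
        gcongr with j
        exacts [singularValues_nonneg M j, singularValues_le_spectralNorm' M j]
    _ = (spectralNorm' M * ‖v‖) ^ 2 := by
        rw [← sum_mul, OrthonormalBasis.sum_sq_inner_right, mul_pow, mul_comm]

theorem inner_leftSingularVector_toEuclideanLin (i : Fin n) :
    ⟪leftSingularVector M i, toEuclideanLin M (rightSingularBasis M i)⟫ = singularValues M i := by
  rw [leftSingularVector, real_inner_smul_left, real_inner_self_eq_norm_sq,
    norm_toEuclideanLin_rightSingularBasis, sq, ← mul_assoc, inv_mul_mul_self]

theorem norm_leftSingularVector_le_one (i : Fin n) : ‖leftSingularVector M i‖ ≤ 1 := by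
  rw [leftSingularVector, norm_smul, norm_inv, norm_toEuclideanLin_rightSingularBasis,
    Real.norm_of_nonneg (singularValues_nonneg M i)]
  exact inv_mul_le_one_of_le₀ le_rfl (singularValues_nonneg M i)

theorem singularValues_sub_spectralNorm'_le_inner (B : Matrix (Fin m) (Fin n) ℝ) (i : Fin n) :
    singularValues M i - spectralNorm' (M - B) ≤
      ⟪leftSingularVector M i, toEuclideanLin B (rightSingularBasis M i)⟫ := by
  have hMB : ‖toEuclideanLin (M - B) (rightSingularBasis M i)‖ ≤ spectralNorm' (M - B) := by
    simpa only [OrthonormalBasis.norm_eq_one, mul_one] using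
      (M - B).norm_toEuclideanLin_le (rightSingularBasis M i)
  calc singularValues M i - spectralNorm' (M - B)
      ≤ singularValues M i - ‖leftSingularVector M i‖ *
          ‖toEuclideanLin (M - B) (rightSingularBasis M i)‖ := by
        gcongr
        exact (mul_le_mul (norm_leftSingularVector_le_one M i) hMB (norm_nonneg _)
          zero_le_one).trans_eq (one_mul _)
    _ ≤ singularValues M i -
          ⟪leftSingularVector M i, toEuclideanLin (M - B) (rightSingularBasis M i)⟫ := by
        gcongr
        exact real_inner_le_norm _ _
    _ = ⟪leftSingularVector M i, toEuclideanLin B (rightSingularBasis M i)⟫ := by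
        rw [map_sub, LinearMap.sub_apply, inner_sub_right, inner_leftSingularVector_toEuclideanLin]
        ring

theorem orthonormal_leftSingularVector {S : Finset (Fin n)}
    (hS : ∀ i ∈ S, singularValues M i ≠ 0) :
    Orthonormal ℝ fun i : S => leftSingularVector M i := by
  rw [orthonormal_iff_ite]
  rintro ⟨i, hi⟩ ⟨j, hj⟩
  simp only [leftSingularVector, real_inner_smul_left, real_inner_smul_right,
    inner_toEuclideanLin_rightSingularBasis, Subtype.mk.injEq]
  split_ifs with h
  · subst h; field_simp [hS i hi]
  · simp

end Matrix

open scoped Classical in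
theorem card_thresholded_singularValues_le {m n : ℕ} (A B : Matrix (Fin m) (Fin n) ℝ)
    (δ : ℝ) (hδ : 0 < δ) (hAB : 0 < spectralNorm' (A - B)) :
    ((Finset.univ.filter fun i =>
        (1 + δ) * spectralNorm' (A - B) < singularValues A i).card : ℝ)
      ≤ nuclearNorm B / (δ * spectralNorm' (A - B)) := by
  set t := spectralNorm' (A - B)
  set S := univ.filter fun i => (1 + δ) * t < singularValues A i
  have hS : ∀ i ∈ S, (1 + δ) * t < singularValues A i := fun i hi => (mem_filter.mp hi).2
  have hx : Orthonormal ℝ fun i : S => A.leftSingularVector i :=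
    A.orthonormal_leftSingularVector fun i hi =>
      ((by positivity : 0 < (1 + δ) * t).trans (hS i hi)).ne'
  have hv : Orthonormal ℝ fun i : S => A.rightSingularBasis i :=
    A.rightSingularBasis.orthonormal.comp _ Subtype.val_injective
  have hgap (i : S) :
      δ * t ≤ ⟪A.leftSingularVector i, toEuclideanLin B (A.rightSingularBasis i)⟫ := by
    linarith [hS i i.2, A.singularValues_sub_spectralNorm'_le_inner B i]
  have hsum : (#S : ℝ) * (δ * t) ≤ nuclearNorm B :=
    calc (#S : ℝ) * (δ * t) = ∑ _i : S, δ * t := by simp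
      _ ≤ ∑ i : S, ⟪A.leftSingularVector i, toEuclideanLin B (A.rightSingularBasis i)⟫ :=
          sum_le_sum fun i _ => hgap i
      _ ≤ nuclearNorm B :=
          B.nuclearNorm_eq_sum_norm_toEuclideanLin ▸ hx.sum_inner_map_le_sum_norm hv _ _
  rwa [le_div_iff₀ (mul_pos hδ hAB)]
end

section
/- Suppose the entries of an m×n matrix M (with entries in [−1,1]) are observed independently with probability p, and suppose M contains r rows that are each duplicated ⌊m/r⌋ times (so M has rank ≤ r). If the duplicated entries come from i.i.d. Uniform[−1,1] random variables, then for any estimator M̃ that is a function of the observed entries, MSE(M̃) ≥ C·(1−p)^{⌊m/r⌋} for a universal constant C > 0. Specifically: for a single Uniform[−1,1] random variable U observed with probability 1 − (1−p)^{⌊m/r⌋} (i.e., unobserved entirely with probability (1−p)^{⌊m/r⌋}), any estimator Û based on the observations satisfies E(Û − U)² ≥ (1/3)·(1−p)^{⌊m/r⌋}. -/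
/-!
On the event `B = false`, which has probability `q` and is independent of `U`, the estimator
sees nothing and returns the constant `c = g none`. Hence its mean squared error is at least
`q · E(c - U)² = q (c² + 1/3) ≥ q/3`.
-/

open MeasureTheory ProbabilityTheory
open scoped ENNReal

theorem integral_Icc_neg_one_one_sq_sub (c : ℝ) :
    ∫ x in Set.Icc (-1 : ℝ) 1, (c - x) ^ 2 = 2 * c ^ 2 + 2 / 3 := by
  rw [integral_Icc_eq_integral_Ioc, ← intervalIntegral.integral_of_le (by norm_num),
    intervalIntegral.integral_comp_sub_left (fun x => x ^ 2), integral_pow]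
  ring

theorem lintegral_sq_sub_uniform_Icc (c : ℝ) :
    ∫⁻ x, ENNReal.ofReal ((c - x) ^ 2) ∂((2 : ℝ≥0∞)⁻¹ • volume.restrict (Set.Icc (-1 : ℝ) 1))
      = ENNReal.ofReal (c ^ 2 + 1 / 3) := by
  rw [lintegral_smul_measure, ← ofReal_integral_eq_lintegral_ofReal
    (Continuous.integrableOn_Icc (by fun_prop)) (.of_forall fun x => sq_nonneg _),
    integral_Icc_neg_one_one_sq_sub, smul_eq_mul, ← ENNReal.ofReal_ofNat 2,
    ← ENNReal.ofReal_inv_of_pos (by norm_num), ← ENNReal.ofReal_mul (by norm_num)]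
  ring_nf

theorem mul_lintegral_le_lintegral_of_indepFun {Ω α : Type*} [MeasurableSpace Ω]
    [MeasurableSpace α] {μ : Measure Ω} {U : Ω → α} {B : Ω → Bool} (hU : Measurable U)
    (hB : Measurable B) (hUB : IndepFun U B μ) {F : Option α → α → ℝ≥0∞}
    (hF : Measurable (F none)) :
    μ {ω | B ω = false} * ∫⁻ ω, F none (U ω) ∂μ
      ≤ ∫⁻ ω, F (if B ω then some (U ω) else none) (U ω) ∂μ := by
  set unobserved : Bool → ℝ≥0∞ := ({false} : Set Bool).indicator 1
  have h_prod : ∫⁻ ω, F none (U ω) * unobserved (B ω) ∂μ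
      = (∫⁻ ω, F none (U ω) ∂μ) * μ {ω | B ω = false} := by
    refine (lintegral_mul_eq_lintegral_mul_lintegral_of_indepFun (hF.comp hU)
      (measurable_of_countable unobserved |>.comp hB)
      (hUB.comp hF (measurable_of_countable _))).trans ?_
    congr 1
    exact lintegral_indicator_one (hB (measurableSet_singleton false))
  calc μ {ω | B ω = false} * ∫⁻ ω, F none (U ω) ∂μ
      = ∫⁻ ω, F none (U ω) * unobserved (B ω) ∂μ := by rw [h_prod, mul_comm]
    _ ≤ _ := lintegral_mono fun ω => by cases B ω <;> simp [unobserved]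

theorem unobserved_uniform_lower_bound_general (m r : ℕ) (p : ℝ)
    {Ω : Type*} [MeasurableSpace Ω] (μ : Measure Ω)
    (U : Ω → ℝ) (hU : Measurable U)
    (hUdist : Measure.map U μ = (2 : ENNReal)⁻¹ • volume.restrict (Set.Icc (-1:ℝ) 1))
    (B : Ω → Bool) (hB : Measurable B)
    (hq : μ {ω | B ω = false} = ENNReal.ofReal ((1 - p) ^ (m / r)))
    (hindep : IndepFun U B μ)
    (g : Option ℝ → ℝ) :
    ENNReal.ofReal ((1 - p) ^ (m / r) / 3)
      ≤ ∫⁻ ω, ENNReal.ofReal ((g (if B ω then some (U ω) else none) - U ω)^2) ∂μ := by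
  have h_const_guess : ∫⁻ ω, ENNReal.ofReal ((g none - U ω) ^ 2) ∂μ
      = ENNReal.ofReal (g none ^ 2 + 1 / 3) := by
    rw [← lintegral_map (f := fun x => ENNReal.ofReal ((g none - x) ^ 2)) (by fun_prop) hU,
      hUdist, lintegral_sq_sub_uniform_Icc]
  calc ENNReal.ofReal ((1 - p) ^ (m / r) / 3)
      = μ {ω | B ω = false} * ENNReal.ofReal (1 / 3) := by
        rw [hq, ← ENNReal.ofReal_mul' (by norm_num), div_eq_mul_one_div]
    _ ≤ μ {ω | B ω = false} * ∫⁻ ω, ENNReal.ofReal ((g none - U ω) ^ 2) ∂μ := by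
        rw [h_const_guess]
        gcongr
        linarith [sq_nonneg (g none)]
    _ ≤ _ := mul_lintegral_le_lintegral_of_indepFun
        (F := fun o x => ENNReal.ofReal ((g o - x) ^ 2)) hU hB hindep (by fun_prop)

theorem unobserved_uniform_lower_bound (m r : ℕ) (hr : 0 < r) (p : ℝ)
    (hp0 : 0 ≤ p) (hp1 : p ≤ 1)
    {Ω : Type*} [MeasurableSpace Ω] (μ : Measure Ω) [IsProbabilityMeasure μ]
    (U : Ω → ℝ) (hU : Measurable U)
    (hUdist : Measure.map U μ = (2 : ENNReal)⁻¹ • volume.restrict (Set.Icc (-1:ℝ) 1))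
    (B : Ω → Bool) (hB : Measurable B)
    (hq : μ {ω | B ω = false} = ENNReal.ofReal ((1 - p) ^ (m / r)))
    (hindep : IndepFun U B μ)
    (g : Option ℝ → ℝ) :
    ENNReal.ofReal ((1 - p) ^ (m / r) / 3)
      ≤ ∫⁻ ω, ENNReal.ofReal ((g (if B ω then some (U ω) else none) - U ω)^2) ∂μ :=
  unobserved_uniform_lower_bound_general m r p μ U hU hUdist B hB hq hindep g
end
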